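/- arXiv:1909.04260 — 3 statements merged into one kernel-verified Lean document; each statement's English description precedes it below -/
import Mathlib

section
/- Let (a,b) be a matching pair in L^∞(ℝ) with subordinated pair (c,d). Suppose there exist bounded operators C_r and D_r on L²(ℝ⁺) with W(c)∘C_r = I and W(d)∘D_r = I (i.e. W(c) and W(d) are right invertible). Then the Wiener–Hopf plus Hankel operator W(a)+H(b) is right invertible; more precisely, setting A := C_r ∘ W(ã⁻¹) ∘ D_r, the operator B := (I − H(c̃))∘A + H(a⁻¹)∘D_r satisfies (W(a)+H(b))∘B = I. -/
open MeasureTheory Complex Filter Set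

noncomputable section

namespace WienerHopf

/-- The space `L²(ℝ;ℂ)`. -/
abbrev L2 : Type := Lp ℂ 2 (volume : Measure ℝ)

open Classical in
/-- Multiplication by a function `a : ℝ → ℂ`, as a bounded operator on `L²(ℝ)`.
(It is defined to be `0` in the degenerate case where `a` is not essentially bounded.) -/
def mul (a : ℝ → ℂ) : L2 →L[ℂ] L2 :=
  if h : MemLp a ⊤ (volume : Measure ℝ) then
    LinearMap.mkContinuous
      { toFun := fun f => ((Lp.memLp f).smul (r := 2) h).toLp (a • (f : ℝ → ℂ))
        map_add' := by
          intro f g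
          rw [← MemLp.toLp_add]
          apply Lp.ext
          filter_upwards [MemLp.coeFn_toLp ((Lp.memLp (f + g)).smul (r := 2) h),
            MemLp.coeFn_toLp (((Lp.memLp f).smul (r := 2) h).add
              ((Lp.memLp g).smul (r := 2) h)),
            Lp.coeFn_add f g] with t h1 h2 h3
          rw [h1, h2]
          simp only [Pi.smul_apply, smul_eq_mul, Pi.mul_apply, Pi.add_apply]
          rw [h3]
          simp [Pi.add_apply, mul_add]
        map_smul' := by
          intro m f
          simp only [RingHom.id_apply]
          rw [← MemLp.toLp_const_smul]
          apply Lp.ext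
          filter_upwards [MemLp.coeFn_toLp ((Lp.memLp (m • f)).smul (r := 2) h),
            MemLp.coeFn_toLp (((Lp.memLp f).smul (r := 2) h).const_smul m),
            Lp.coeFn_smul m f] with t h1 h2 h3
          rw [h1, h2]
          simp only [Pi.smul_apply, smul_eq_mul, Pi.mul_apply]
          rw [h3]
          simp only [Pi.smul_apply, smul_eq_mul]
          ring
        }
      (eLpNorm a ⊤ (volume : Measure ℝ)).toReal
      (by
        intro f
        simp only [LinearMap.coe_mk, AddHom.coe_mk]
        rw [Lp.norm_toLp, Lp.norm_def]
        have hle := eLpNorm_smul_le_mul_eLpNorm (Lp.aestronglyMeasurable f) h.1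
          (p := ⊤) (q := 2) (r := 2)
        calc (eLpNorm (a • (f : ℝ → ℂ)) 2 (volume : Measure ℝ)).toReal
            ≤ (eLpNorm a ⊤ (volume : Measure ℝ) * eLpNorm (f : ℝ → ℂ) 2 volume).toReal := by
              apply ENNReal.toReal_mono _ hle
              exact ENNReal.mul_ne_top h.2.ne (Lp.eLpNorm_lt_top f).ne
          _ = (eLpNorm a ⊤ (volume : Measure ℝ)).toReal *
              (eLpNorm (f : ℝ → ℂ) 2 (volume : Measure ℝ)).toReal := ENNReal.toReal_mul)
  else 0

theorem mul_coeFn {a : ℝ → ℂ} (h : MemLp a ⊤ (volume : Measure ℝ)) (f : L2) :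
    (mul a f : ℝ → ℂ) =ᵐ[volume] fun t => a t * f t := by
  rw [mul, dif_pos h]
  show ⇑(((Lp.memLp f).smul (r := 2) h).toLp (a • (f : ℝ → ℂ))) =ᵐ[volume]
    fun t => a t * f t
  exact (MemLp.coeFn_toLp _).trans
    (Eventually.of_forall fun t => by simp [Pi.smul_apply])

/-- `(-t)`-reflection is measure preserving. -/
theorem negMP : MeasurePreserving (fun t : ℝ => -t) volume volume :=
  Measure.measurePreserving_neg (volume : Measure ℝ)

/-- The reflection operator `(Jφ)(t) = φ(-t)` on `L²(ℝ)`. -/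
def reflect : L2 →L[ℂ] L2 :=
  LinearMap.mkContinuous
    { toFun := ⇑(Lp.compMeasurePreserving (fun t : ℝ => -t) negMP)
      map_add' := fun f g => map_add _ f g
      map_smul' := by
        intro m g
        simp only [RingHom.id_apply]
        apply Lp.ext
        filter_upwards [Lp.coeFn_compMeasurePreserving (f := fun t : ℝ => -t) (m • g) negMP,
          Lp.coeFn_smul m (Lp.compMeasurePreserving (fun t : ℝ => -t) negMP g),
          Lp.coeFn_compMeasurePreserving (f := fun t : ℝ => -t) g negMP,
          negMP.quasiMeasurePreserving.ae_eq_comp (Lp.coeFn_smul m g)] with t h1 h2 h3 h4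
        rw [h1, h2, h4]
        simp only [Function.comp_apply, Pi.smul_apply, smul_eq_mul]
        rw [h3]
        simp only [Function.comp_apply]
      }
    1
    (by
      intro g
      rw [one_mul]
      exact le_of_eq (Lp.norm_compMeasurePreserving g _))

theorem reflect_coeFn (g : L2) :
    (reflect g : ℝ → ℂ) =ᵐ[volume] fun t => g (-t) :=
  Lp.coeFn_compMeasurePreserving (f := fun t : ℝ => -t) g negMP

/-- The indicator function of `(0,∞)`. -/
def chiPlus : ℝ → ℂ := Set.indicator (Set.Ioi (0 : ℝ)) (fun _ => 1)

theorem chiPlus_memℒp : MemLp chiPlus ⊤ (volume : Measure ℝ) :=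
  (memLp_top_const (1 : ℂ)).indicator measurableSet_Ioi

/-- The subspace of `L²(ℝ)` consisting of functions vanishing a.e. on `(-∞,0)`;
it is identified with `L²(ℝ⁺)`. -/
def posSubspace : Submodule ℂ L2 where
  carrier := {f : L2 | ∀ᵐ t : ℝ ∂volume, t < 0 → (f : ℝ → ℂ) t = 0}
  zero_mem' := by
    filter_upwards [Lp.coeFn_zero ℂ 2 (volume : Measure ℝ)] with t ht _
    simp [ht]
  add_mem' := by
    intro f g hf hg
    filter_upwards [hf, hg, Lp.coeFn_add f g] with t h1 h2 h3 hlt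
    rw [h3]
    simp [Pi.add_apply, h1 hlt, h2 hlt]
  smul_mem' := by
    intro m f hf
    filter_upwards [hf, Lp.coeFn_smul m f] with t h1 h2 hlt
    rw [h2]
    simp [Pi.smul_apply, h1 hlt]

/-- `L²(ℝ⁺)`, realized as the subspace of `L²(ℝ)` of functions vanishing a.e. on `(-∞,0)`. -/
abbrev Lp2Plus : Type := ↥posSubspace

theorem chiPlus_mul_mem (g : L2) : mul chiPlus g ∈ posSubspace := by
  filter_upwards [mul_coeFn chiPlus_memℒp g] with t ht hlt
  rw [ht, chiPlus, Set.indicator_of_notMem (by simpa using hlt.le), zero_mul]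

/-- Compression of an operator on `L²(ℝ)` to the subspace `L²(ℝ⁺)`:
`φ ↦ χ₊ ⬝ (T φ)`. -/
def compress (T : L2 →L[ℂ] L2) : Lp2Plus →L[ℂ] Lp2Plus :=
  LinearMap.mkContinuous
    { toFun := fun φ => ⟨mul chiPlus (T φ.val), chiPlus_mul_mem _⟩
      map_add' := by intro φ ψ; apply Subtype.ext; simp
      map_smul' := by intro m φ; apply Subtype.ext; simp }
    ‖(mul chiPlus).comp T‖
    (by intro φ; exact ((mul chiPlus).comp T).le_opNorm φ.val)

theorem compress_coe (T : L2 →L[ℂ] L2) (φ : Lp2Plus) :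
    (compress T φ : L2) = mul chiPlus (T φ.val) := rfl

/-- An abstract realization of the Fourier transform
`(𝓕φ)(ξ) = ∫ e^{iξx} φ(x) dx` on `L²(ℝ)` (together with its inverse
`(𝓕⁻¹ψ)(x) = (2π)⁻¹ ∫ e^{-iξx} ψ(ξ) dξ`): a continuous linear bijection of `L²(ℝ)`
that is given by the above integral formulas on integrable functions.  By density
of `L¹ ∩ L²` in `L²`, these properties determine the operator uniquely, and by the
Fourier–Plancherel theory such an operator exists. -/
structure FourierL2 where
  equiv : L2 ≃L[ℂ] L2
  forward : ∀ φ : L2, Integrable (φ : ℝ → ℂ) volume →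
      (equiv φ : ℝ → ℂ) =ᵐ[volume]
        fun ξ : ℝ => ∫ x : ℝ, Complex.exp (Complex.I * ξ * x) * φ x
  inverse : ∀ ψ : L2, Integrable (ψ : ℝ → ℂ) volume →
      (equiv.symm ψ : ℝ → ℂ) =ᵐ[volume]
        fun x : ℝ => (2 * Real.pi : ℂ)⁻¹ * ∫ ξ : ℝ, Complex.exp (-(Complex.I * ξ * x)) * ψ ξ

/-- `W⁰(a) = 𝓕⁻¹ M_a 𝓕`, the convolution (Fourier multiplier) operator on `L²(ℝ)`. -/
def W0 (F : FourierL2) (a : ℝ → ℂ) : L2 →L[ℂ] L2 :=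
  (F.equiv.symm : L2 →L[ℂ] L2).comp ((mul a).comp (F.equiv : L2 →L[ℂ] L2))

/-- The Wiener–Hopf operator `W(a) = χ₊ W⁰(a)` on `L²(ℝ⁺)`. -/
def W (F : FourierL2) (a : ℝ → ℂ) : Lp2Plus →L[ℂ] Lp2Plus :=
  compress (W0 F a)

/-- The Hankel operator `H(b) = χ₊ W⁰(b) J` on `L²(ℝ⁺)`. -/
def H (F : FourierL2) (b : ℝ → ℂ) : Lp2Plus →L[ℂ] Lp2Plus :=
  compress ((W0 F b).comp reflect)

/-- `a` is invertible in the Banach algebra `L^∞(ℝ)`: `a ∈ L^∞`, `a ≠ 0` a.e.,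
and the pointwise inverse `a⁻¹` again belongs to `L^∞`. -/
def InvertibleLinf (a : ℝ → ℂ) : Prop :=
  MemLp a ⊤ (volume : Measure ℝ) ∧ (∀ᵐ t : ℝ ∂volume, a t ≠ 0) ∧
    MemLp (fun t => (a t)⁻¹) ⊤ (volume : Measure ℝ)

/-- `(a,b)` is a matching pair: `a, b` are invertible in `L^∞(ℝ)` and
`a(t)a(-t) = b(t)b(-t)` for a.e. `t`. -/
def MatchingPair (a b : ℝ → ℂ) : Prop :=
  InvertibleLinf a ∧ InvertibleLinf b ∧
    ∀ᵐ t : ℝ ∂volume, a t * a (-t) = b t * b (-t)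

/-!
The Fourier transform commutes with the reflection `J`, so `J W⁰(v) = W⁰(ṽ) J`. Together with
`P + JPJ = I` for `P = χ₊` this gives the product formulas
`W(uv) = W(u)W(v) + H(u)H(ṽ)` and `H(uv) = W(u)H(v) + H(u)W(ṽ)`.
Applied to `a = bc`, `b = ac̃`, `bã⁻¹ = d` and `aa⁻¹ = 1` (the middle two are the matching
condition) they yield `(W(a)+H(b))(I − H(c̃)) = (W(b)+H(a))W(c)` and
`(W(b)+H(a))W(ã⁻¹) + (W(a)+H(b))H(a⁻¹) = W(d)`. Since `W(c)Cᵣ = I`, expanding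
`(W(a)+H(b))B` with these two identities leaves `W(d)Dᵣ = I`.
-/

theorem ae_comp_neg {p : ℝ → Prop} (h : ∀ᵐ t : ℝ ∂volume, p t) :
    ∀ᵐ t : ℝ ∂volume, p (-t) :=
  negMP.quasiMeasurePreserving.ae h

theorem memLp_comp_neg {u : ℝ → ℂ} {p : ENNReal} (hu : MemLp u p volume) :
    MemLp (fun t => u (-t)) p volume :=
  hu.comp_measurePreserving negMP

section Multiplication

variable {u v : ℝ → ℂ}

theorem mul_congr_ae (hu : MemLp u ⊤ volume) (h : u =ᵐ[volume] v) : mul u = mul v := by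
  refine ContinuousLinearMap.ext fun f => Lp.ext ?_
  filter_upwards [mul_coeFn hu f, mul_coeFn (hu.ae_eq h) f, h] with t h1 h2 h3
  rw [h1, h2, h3]

theorem mul_fun_mul (hu : MemLp u ⊤ volume) (hv : MemLp v ⊤ volume) :
    mul (fun t => u t * v t) = (mul u).comp (mul v) := by
  refine ContinuousLinearMap.ext fun f => Lp.ext ?_
  filter_upwards [mul_coeFn (hv.mul' hu) f, mul_coeFn hu (mul v f), mul_coeFn hv f]
    with t h1 h2 h3
  rw [ContinuousLinearMap.comp_apply, h1, h2, h3, mul_assoc]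

theorem mul_fun_add (hu : MemLp u ⊤ volume) (hv : MemLp v ⊤ volume) :
    mul (fun t => u t + v t) = mul u + mul v := by
  have huv : MemLp (fun t => u t + v t) ⊤ volume := hu.add hv
  refine ContinuousLinearMap.ext fun f => Lp.ext ?_
  filter_upwards [mul_coeFn huv f, Lp.coeFn_add (mul u f) (mul v f), mul_coeFn hu f,
    mul_coeFn hv f] with t h1 h2 h3 h4
  rw [add_apply, h1, h2, Pi.add_apply, h3, h4, add_mul]

theorem mul_const_one : mul (fun _ => 1) = 1 := by
  refine ContinuousLinearMap.ext fun f => Lp.ext ?_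
  filter_upwards [mul_coeFn (memLp_top_const (1 : ℂ)) f] with t ht
  rw [ht, one_mul, one_apply_eq_self]

end Multiplication

theorem reflect_comp_reflect : reflect.comp reflect = 1 := by
  refine ContinuousLinearMap.ext fun f => Lp.ext ?_
  filter_upwards [reflect_coeFn (reflect f), ae_comp_neg (reflect_coeFn f)] with t h1 h2
  rw [ContinuousLinearMap.comp_apply, h1, h2, neg_neg, one_apply_eq_self]

theorem reflect_comp_mul {u : ℝ → ℂ} (hu : MemLp u ⊤ volume) :
    reflect.comp (mul u) = (mul fun t => u (-t)).comp reflect := by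
  refine ContinuousLinearMap.ext fun f => Lp.ext ?_
  filter_upwards [reflect_coeFn (mul u f), ae_comp_neg (mul_coeFn hu f),
    mul_coeFn (memLp_comp_neg hu) (reflect f), reflect_coeFn f]
    with t h1 h2 h3 h4
  rw [ContinuousLinearMap.comp_apply, ContinuousLinearMap.comp_apply, h1, h2, h3, h4]

theorem chiPlus_add_chiPlus_neg {t : ℝ} (ht : t ≠ 0) : chiPlus t + chiPlus (-t) = 1 := by
  rcases ht.lt_or_gt with h | h <;> simp [chiPlus, h, h.not_gt]

theorem mul_chiPlus_add_reflect : mul chiPlus + reflect.comp ((mul chiPlus).comp reflect) = 1 := by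
  rw [← ContinuousLinearMap.comp_assoc, reflect_comp_mul chiPlus_memℒp,
    ContinuousLinearMap.comp_assoc, reflect_comp_reflect, ← ContinuousLinearMap.mul_def, mul_one,
    ← mul_fun_add chiPlus_memℒp (memLp_comp_neg chiPlus_memℒp), ← mul_const_one]
  refine mul_congr_ae (chiPlus_memℒp.add (memLp_comp_neg chiPlus_memℒp)) ?_
  filter_upwards [Measure.ae_ne volume 0] with t ht using chiPlus_add_chiPlus_neg ht

theorem mul_chiPlus_reflect (φ : Lp2Plus) : mul chiPlus (reflect φ) = 0 := by
  apply Lp.ext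
  filter_upwards [mul_coeFn chiPlus_memℒp (reflect φ), reflect_coeFn (φ : L2), ae_comp_neg φ.2,
    Lp.coeFn_zero ℂ 2 volume] with t h1 h2 h3 h4
  rw [h1, h4, Pi.zero_apply]
  rcases le_or_gt t 0 with h | h
  · simp [chiPlus, h.not_gt]
  · rw [h2, h3 (neg_lt_zero.mpr h), mul_zero]

section Compression

variable (S T : L2 →L[ℂ] L2)

theorem compress_mul_compress :
    compress S * compress T = compress (S.comp ((mul chiPlus).comp T)) :=
  rfl

theorem compress_add : compress (S + T) = compress S + compress T := by
  ext φ : 2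
  simp only [compress_coe, add_apply, map_add, Submodule.coe_add]

theorem compress_comp : compress (S.comp T) =
    compress S * compress T + compress (S.comp reflect) * compress (reflect.comp T) := by
  have hST : S.comp T =
      S.comp ((mul chiPlus + reflect.comp ((mul chiPlus).comp reflect)).comp T) := by
    rw [mul_chiPlus_add_reflect]
    rfl
  rw [compress_mul_compress, compress_mul_compress, ← compress_add, hST]
  simp only [ContinuousLinearMap.add_comp, ContinuousLinearMap.comp_add,
    ContinuousLinearMap.comp_assoc]

theorem compress_reflect : compress reflect = 0 := by
  ext φ : 2
  exact mul_chiPlus_reflect φ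

end Compression

theorem integrable_lpSimpleFunc {α E : Type*} [MeasurableSpace α] [NormedAddCommGroup E]
    {μ : Measure α} {p : ENNReal} (hp0 : p ≠ 0) (hp : p ≠ ⊤) (s : Lp.simpleFunc E p μ) :
    Integrable ((s : Lp E p μ) : α → E) μ :=
  ((SimpleFunc.memLp_iff_integrable hp0 hp).mp (Lp.simpleFunc.memLp s)).congr
    (Lp.simpleFunc.toSimpleFunc_eq_toFun s)

namespace FourierL2

variable (F : FourierL2)

theorem equiv_reflect_of_integrable {ψ : L2} (hψ : Integrable (ψ : ℝ → ℂ) volume) :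
    F.equiv (reflect ψ) = reflect (F.equiv ψ) := by
  have hneg : MeasurableEmbedding (fun t : ℝ => -t) :=
    (Homeomorph.neg ℝ).isClosedEmbedding.measurableEmbedding
  have hJψ : Integrable (reflect ψ : ℝ → ℂ) volume :=
    ((negMP.integrable_comp_emb hneg).mpr hψ).congr (reflect_coeFn ψ).symm
  apply Lp.ext
  filter_upwards [F.forward _ hJψ, reflect_coeFn (F.equiv ψ), ae_comp_neg (F.forward ψ hψ)]
    with ξ h1 h2 h3
  rw [h1, h2, h3, ← negMP.integral_comp hneg]
  refine integral_congr_ae ?_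
  filter_upwards [ae_comp_neg (reflect_coeFn ψ)] with x hx
  simp only [hx, ofReal_neg, neg_mul, mul_neg, neg_neg]

theorem equiv_comp_reflect :
    (F.equiv : L2 →L[ℂ] L2).comp reflect = reflect.comp (F.equiv : L2 →L[ℂ] L2) := by
  refine ContinuousLinearMap.coeFn_injective <|
    (Lp.simpleFunc.denseRange (p := 2) ENNReal.ofNat_ne_top).equalizer (map_continuous _)
      (map_continuous _) (funext fun s => ?_)
  exact F.equiv_reflect_of_integrable (integrable_lpSimpleFunc two_ne_zero ENNReal.ofNat_ne_top s)

theorem symm_comp_reflect :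
    (F.equiv.symm : L2 →L[ℂ] L2).comp reflect =
      reflect.comp (F.equiv.symm : L2 →L[ℂ] L2) := by
  ext g : 1
  apply F.equiv.injective
  have hJ := congr($(F.equiv_comp_reflect) (F.equiv.symm g))
  simp only [ContinuousLinearMap.comp_apply, ContinuousLinearEquiv.coe_coe,
    ContinuousLinearEquiv.apply_symm_apply] at hJ ⊢
  exact hJ.symm

end FourierL2

section FourierMultiplier

variable (F : FourierL2) {u v : ℝ → ℂ}

theorem W0_congr_ae (hu : MemLp u ⊤ volume) (h : u =ᵐ[volume] v) : W0 F u = W0 F v := by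
  rw [W0, W0, mul_congr_ae hu h]

theorem W0_mul (hu : MemLp u ⊤ volume) (hv : MemLp v ⊤ volume) :
    W0 F (fun t => u t * v t) = (W0 F u).comp (W0 F v) := by
  ext f : 1
  simp only [W0, mul_fun_mul hu hv, ContinuousLinearMap.comp_apply, ContinuousLinearEquiv.coe_coe,
    ContinuousLinearEquiv.apply_symm_apply]

theorem W0_const_one : W0 F (fun _ => 1) = 1 := by
  ext f : 1
  simp only [W0, mul_const_one, ContinuousLinearMap.comp_apply, ContinuousLinearEquiv.coe_coe,
    one_apply_eq_self, ContinuousLinearEquiv.symm_apply_apply]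

theorem reflect_comp_W0 (hv : MemLp v ⊤ volume) :
    reflect.comp (W0 F v) = (W0 F fun t => v (-t)).comp reflect := by
  simp only [W0]
  rw [← ContinuousLinearMap.comp_assoc, ← F.symm_comp_reflect, ContinuousLinearMap.comp_assoc,
    ← ContinuousLinearMap.comp_assoc reflect, reflect_comp_mul hv, ContinuousLinearMap.comp_assoc,
    ← F.equiv_comp_reflect]
  simp only [ContinuousLinearMap.comp_assoc]

end FourierMultiplier

section WienerHopfHankel

variable (F : FourierL2) {u v : ℝ → ℂ}

theorem W_congr_ae (hu : MemLp u ⊤ volume) (h : u =ᵐ[volume] v) : W F u = W F v :=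
  congrArg compress (W0_congr_ae F hu h)

theorem H_congr_ae (hu : MemLp u ⊤ volume) (h : u =ᵐ[volume] v) : H F u = H F v :=
  congrArg (fun T : L2 →L[ℂ] L2 => compress (T.comp reflect)) (W0_congr_ae F hu h)

theorem W_mul (hu : MemLp u ⊤ volume) (hv : MemLp v ⊤ volume) :
    W F (fun t => u t * v t) = W F u * W F v + H F u * H F (fun t => v (-t)) := by
  rw [W, W0_mul F hu hv, compress_comp, reflect_comp_W0 F hv]
  rfl

theorem H_mul (hu : MemLp u ⊤ volume) (hv : MemLp v ⊤ volume) :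
    H F (fun t => u t * v t) = W F u * H F v + H F u * W F (fun t => v (-t)) := by
  rw [H, W0_mul F hu hv, ContinuousLinearMap.comp_assoc, compress_comp,
    ← ContinuousLinearMap.comp_assoc reflect, reflect_comp_W0 F hv,
    ContinuousLinearMap.comp_assoc, reflect_comp_reflect]
  rfl

theorem H_const_one : H F (fun _ => 1) = 0 := by
  rw [H, W0_const_one, ← ContinuousLinearMap.mul_def, one_mul, compress_reflect]

end WienerHopfHankel

section MatchingPair

variable (F : FourierL2) {a b : ℝ → ℂ}

theorem W_add_H_mul_one_sub_H {c : ℝ → ℂ} (ha : MemLp a ⊤ volume) (hb : InvertibleLinf b)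
    (hab : ∀ᵐ t : ℝ ∂volume, a t * a (-t) = b t * b (-t))
    (hc : c = fun t => a t * (b t)⁻¹) :
    (W F a + H F b) * (1 - H F (fun t => c (-t))) = (W F b + H F a) * W F c := by
  obtain ⟨hbM, hb0, hbiM⟩ := hb
  have hcM : MemLp c ⊤ volume := hc ▸ hbiM.mul' ha
  have hc'M : MemLp (fun t => c (-t)) ⊤ volume := memLp_comp_neg hcM
  have hbc : (fun t => b t * c t) =ᵐ[volume] a := by
    filter_upwards [hb0] with t ht
    rw [hc, mul_left_comm, mul_inv_cancel₀ ht, mul_one]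
  have hac' : (fun t => a t * c (-t)) =ᵐ[volume] b := by
    filter_upwards [hab, ae_comp_neg hb0] with t hmatch ht
    rw [hc, ← mul_assoc, hmatch, mul_assoc, mul_inv_cancel₀ ht, mul_one]
  have hWa : W F a - H F b * H F (fun t => c (-t)) = W F b * W F c := by
    rw [sub_eq_iff_eq_add, ← W_congr_ae F (hcM.mul' hbM) hbc, W_mul F hbM hcM]
  have hHb : H F b - W F a * H F (fun t => c (-t)) = H F a * W F c := by
    rw [sub_eq_iff_eq_add', ← H_congr_ae F (hc'M.mul' ha) hac', H_mul F ha hc'M]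
    simp only [neg_neg]
  calc (W F a + H F b) * (1 - H F (fun t => c (-t)))
      = (W F a - H F b * H F (fun t => c (-t))) + (H F b - W F a * H F (fun t => c (-t))) := by
        rw [mul_sub, mul_one, add_mul]
        abel
    _ = (W F b + H F a) * W F c := by rw [hWa, hHb, add_mul]

theorem W_add_H_mul_W_add_W_add_H_mul_H {d : ℝ → ℂ} (ha : InvertibleLinf a)
    (hb : MemLp b ⊤ volume) (hb0 : ∀ᵐ t : ℝ ∂volume, b t ≠ 0)
    (hab : ∀ᵐ t : ℝ ∂volume, a t * a (-t) = b t * b (-t))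
    (hd : d = fun t => a t * (b (-t))⁻¹) :
    (W F b + H F a) * W F (fun t => (a (-t))⁻¹) + (W F a + H F b) * H F (fun t => (a t)⁻¹) =
      W F d := by
  obtain ⟨haM, ha0, haiM⟩ := ha
  subst hd
  have hbd : (fun t => b t * (a (-t))⁻¹) =ᵐ[volume] fun t => a t * (b (-t))⁻¹ := by
    filter_upwards [hab, ae_comp_neg ha0, ae_comp_neg hb0] with t hmatch ha0' hb0'
    rw [← div_eq_mul_inv, ← div_eq_mul_inv, div_eq_div_iff ha0' hb0', hmatch]
  have haa : (fun t => a t * (a t)⁻¹) =ᵐ[volume] fun _ => 1 := by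
    filter_upwards [ha0] with t ht using mul_inv_cancel₀ ht
  have hWd : W F b * W F (fun t => (a (-t))⁻¹) + H F b * H F (fun t => (a t)⁻¹) =
      W F (fun t => a t * (b (-t))⁻¹) := by
    rw [← W_congr_ae F ((memLp_comp_neg haiM).mul' hb) hbd, W_mul F hb (memLp_comp_neg haiM)]
    simp only [neg_neg]
  have hH1 : W F a * H F (fun t => (a t)⁻¹) + H F a * W F (fun t => (a (-t))⁻¹) = 0 := by
    rw [← H_mul F haM haiM, H_congr_ae F (haiM.mul' haM) haa, H_const_one]
  calc (W F b + H F a) * W F (fun t => (a (-t))⁻¹) + (W F a + H F b) * H F (fun t => (a t)⁻¹)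
      = (W F b * W F (fun t => (a (-t))⁻¹) + H F b * H F (fun t => (a t)⁻¹)) +
          (W F a * H F (fun t => (a t)⁻¹) + H F a * W F (fun t => (a (-t))⁻¹)) := by
        rw [add_mul, add_mul]
        abel
    _ = W F (fun t => a t * (b (-t))⁻¹) := by rw [hWd, hH1, add_zero]

end MatchingPair

theorem mul_add_mul_eq_one {R : Type*} [Ring R] {x y p q w h d l r : R} (hp : x * p = y * q)
    (hd : y * w + x * h = d) (hl : q * l = 1) (hr : d * r = 1) :
    x * (p * (l * (w * r)) + h * r) = 1 :=
  calc x * (p * (l * (w * r)) + h * r) = x * p * l * w * r + x * h * r := by noncomm_ring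
    _ = y * (q * l) * w * r + x * h * r := by rw [hp]; noncomm_ring
    _ = 1 := by rw [hl, mul_one, ← add_mul, hd, hr]

/-- If `(a,b)` is a matching pair with subordinated pair `(c,d)` and the Wiener-Hopf
operators `W(c)`, `W(d)` are right invertible, then `W(a)+H(b)` is right invertible,
with right inverse `B = (I - H(c̃)) A + H(a⁻¹) Dᵣ`, `A = Cᵣ W(ã⁻¹) Dᵣ`. -/
theorem rightInvertible_of_matching
    (F : FourierL2) (a b c d : ℝ → ℂ) (hab : MatchingPair a b)
    (hc : c = fun t => a t * (b t)⁻¹) (hd : d = fun t => a t * (b (-t))⁻¹)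
    (Cr Dr : Lp2Plus →L[ℂ] Lp2Plus)
    (hCr : (W F c).comp Cr = 1) (hDr : (W F d).comp Dr = 1)
    (A B : Lp2Plus →L[ℂ] Lp2Plus)
    (hA : A = Cr.comp ((W F (fun t => (a (-t))⁻¹)).comp Dr))
    (hB : B = ((1 : Lp2Plus →L[ℂ] Lp2Plus) - H F (fun t => c (-t))).comp A +
      (H F (fun t => (a t)⁻¹)).comp Dr) :
    (∃ R : Lp2Plus →L[ℂ] Lp2Plus, (W F a + H F b).comp R = 1) ∧
      (W F a + H F b).comp B = 1 := by
  obtain ⟨ha, hb, hmatch⟩ := hab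
  have hRight : (W F a + H F b) * B = 1 := by
    rw [hB, hA]
    exact mul_add_mul_eq_one (W_add_H_mul_one_sub_H F ha.1 hb hmatch hc)
      (W_add_H_mul_W_add_W_add_H_mul_H F ha hb.1 hb.2.1 hmatch hd) hCr hDr
  exact ⟨⟨B, hRight⟩, hRight⟩

end WienerHopf
end
end

section
/- Let (a,b) be a matching pair in L^∞(ℝ) with subordinated pair (c,d), and let M be the operator on L²(ℝ⁺) ⊕ L²(ℝ⁺) given by the 2×2 operator matrix M = [[0, W(d)], [−W(c), W(ã⁻¹)]]. Suppose there exist bounded operators C_r and D_l on L²(ℝ⁺) with W(c)∘C_r = I (W(c) right invertible) and D_l∘W(d) = I (W(d) left invertible). Then M is generalized invertible, and the operator matrix M_g = [[C_r∘W(ã⁻¹)∘D_l, −C_r], [D_l, 0]] is a generalized inverse of M, i.e. M∘M_g∘M = M. -/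
open MeasureTheory Complex Filter Set

noncomputable section

namespace ContinuousLinearMap

section Semiring

variable {R X Y X' Y' X'' Y'' : Type*} [Semiring R]
  [TopologicalSpace X] [AddCommMonoid X] [Module R X]
  [TopologicalSpace Y] [AddCommMonoid Y] [Module R Y]
  [TopologicalSpace X'] [AddCommMonoid X'] [Module R X'] [ContinuousAdd X']
  [TopologicalSpace Y'] [AddCommMonoid Y'] [Module R Y'] [ContinuousAdd Y']
  [TopologicalSpace X''] [AddCommMonoid X''] [Module R X''] [ContinuousAdd X'']
  [TopologicalSpace Y''] [AddCommMonoid Y''] [Module R Y''] [ContinuousAdd Y'']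

/-- The operator `X × Y → X' × Y'` with block matrix `[[P, Q], [S, T]]`. -/
def blockMatrix (P : X →L[R] X') (Q : Y →L[R] X') (S : X →L[R] Y') (T : Y →L[R] Y') :
    X × Y →L[R] X' × Y' :=
  (P.coprod Q).prod (S.coprod T)

theorem blockMatrix_comp_blockMatrix
    (P : X' →L[R] X'') (Q : Y' →L[R] X'') (S : X' →L[R] Y'') (T : Y' →L[R] Y'')
    (P' : X →L[R] X') (Q' : Y →L[R] X') (S' : X →L[R] Y') (T' : Y →L[R] Y') :
    (blockMatrix P Q S T).comp (blockMatrix P' Q' S' T') =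
      blockMatrix (P.comp P' + Q.comp S') (P.comp Q' + Q.comp T')
        (S.comp P' + T.comp S') (S.comp Q' + T.comp T') := by
  ext x <;> simp [blockMatrix]

end Semiring

section Ring

variable {R X Y : Type*} [Ring R]
  [TopologicalSpace X] [AddCommGroup X] [Module R X] [IsTopologicalAddGroup X]
  [TopologicalSpace Y] [AddCommGroup Y] [Module R Y] [IsTopologicalAddGroup Y]

theorem blockMatrix_comp_comp_blockMatrix_of_comp_eq_one
    {A : X →L[R] Y} {B : Y →L[R] X} {C : Y →L[R] X} {D : X →L[R] Y} (T : Y →L[R] Y)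
    (hAC : A.comp C = 1) (hDB : D.comp B = 1) :
    (blockMatrix 0 B (-A) T).comp
        ((blockMatrix (C.comp (T.comp D)) (-C) D 0).comp (blockMatrix 0 B (-A) T)) =
      blockMatrix 0 B (-A) T := by
  have hACA : A.comp (C.comp A) = A := by rw [← comp_assoc, hAC, one_def, id_comp]
  have hMgM : (blockMatrix (C.comp (T.comp D)) (-C) D 0).comp (blockMatrix 0 B (-A) T) =
      blockMatrix (C.comp A) 0 0 1 := by
    rw [blockMatrix_comp_blockMatrix]
    simp [hDB, one_def, comp_assoc]
  rw [hMgM, blockMatrix_comp_blockMatrix]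
  simp [hACA, one_def]

end Ring

end ContinuousLinearMap

namespace WienerHopf

theorem matrix_generalized_inverse_general
    (F : FourierL2) (a c d : ℝ → ℂ)
    (Cr Dl : Lp2Plus →L[ℂ] Lp2Plus)
    (hCr : (W F c).comp Cr = 1) (hDl : Dl.comp (W F d) = 1)
    (M Mg : Lp2Plus × Lp2Plus →L[ℂ] Lp2Plus × Lp2Plus)
    (hM : M = (((0 : Lp2Plus →L[ℂ] Lp2Plus).coprod (W F d)).prod
      ((-(W F c)).coprod (W F (fun t => (a (-t))⁻¹)))))
    (hMg : Mg = ((Cr.comp ((W F (fun t => (a (-t))⁻¹)).comp Dl)).coprod (-Cr)).prod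
      (Dl.coprod (0 : Lp2Plus →L[ℂ] Lp2Plus))) :
    (∃ N : Lp2Plus × Lp2Plus →L[ℂ] Lp2Plus × Lp2Plus, M.comp (N.comp M) = M) ∧
      M.comp (Mg.comp M) = M := by
  have hMMgM : M.comp (Mg.comp M) = M := by
    subst hM hMg
    exact ContinuousLinearMap.blockMatrix_comp_comp_blockMatrix_of_comp_eq_one
      _ hCr hDl
  exact ⟨⟨Mg, hMMgM⟩, hMMgM⟩

/-- If `W(c)` is right invertible and `W(d)` is left invertible, then
`M = [[0, W(d)], [-W(c), W(ã⁻¹)]]` is generalized invertible, with generalized inverse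
`M_g = [[Cᵣ W(ã⁻¹) Dₗ, -Cᵣ], [Dₗ, 0]]`. -/
theorem matrix_generalized_inverse
    (F : FourierL2) (a b c d : ℝ → ℂ) (hab : MatchingPair a b)
    (hc : c = fun t => a t * (b t)⁻¹) (hd : d = fun t => a t * (b (-t))⁻¹)
    (Cr Dl : Lp2Plus →L[ℂ] Lp2Plus)
    (hCr : (W F c).comp Cr = 1) (hDl : Dl.comp (W F d) = 1)
    (M Mg : Lp2Plus × Lp2Plus →L[ℂ] Lp2Plus × Lp2Plus)
    (hM : M = (((0 : Lp2Plus →L[ℂ] Lp2Plus).coprod (W F d)).prod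
      ((-(W F c)).coprod (W F (fun t => (a (-t))⁻¹)))))
    (hMg : Mg = ((Cr.comp ((W F (fun t => (a (-t))⁻¹)).comp Dl)).coprod (-Cr)).prod
      (Dl.coprod (0 : Lp2Plus →L[ℂ] Lp2Plus))) :
    (∃ N : Lp2Plus × Lp2Plus →L[ℂ] Lp2Plus × Lp2Plus, M.comp (N.comp M) = M) ∧
      M.comp (Mg.comp M) = M :=
  matrix_generalized_inverse_general F a c d Cr Dl hCr hDl M Mg hM hMg

end WienerHopf
end
end

section
/- Let ν ≥ 0 and let e_ν(t) := e^{iνt}. Then on L²(ℝ⁺): (1) W(e_{−ν}) ∘ W(e_ν) = I, so W(e_ν) is left invertible with left inverse W(e_{−ν}); and (2) I − W(e_ν) ∘ W(e_{−ν}) is the operator of pointwise multiplication by the indicator function of the interval (0, ν); in particular it is an (orthogonal) projection onto the subspace of functions in L²(ℝ⁺) vanishing a.e. outside (0, ν). -/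
open MeasureTheory Complex Filter Set

noncomputable section

theorem MeasureTheory.Lp.eq_of_eq_on_integrable {α E X : Type*} [MeasurableSpace α]
    {μ : Measure α} [NormedAddCommGroup E] {p : ENNReal} [Fact (1 ≤ p)]
    [TopologicalSpace X] [T2Space X]
    (hp : p ≠ ⊤) {f g : Lp E p μ → X} (hf : Continuous f) (hg : Continuous g)
    (h : ∀ φ : Lp E p μ, Integrable φ μ → f φ = g φ) : f = g := by
  refine (Lp.simpleFunc.denseRange hp).equalizer hf hg (funext fun φ => h φ ?_)
  have hp₀ : p ≠ 0 := (lt_of_lt_of_le zero_lt_one Fact.out).ne'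
  exact ((SimpleFunc.memLp_iff_integrable hp₀ hp).mp (Lp.simpleFunc.memLp φ)).congr
    (Lp.simpleFunc.toSimpleFunc_eq_toFun φ)

namespace WienerHopf

theorem memLp_top_cexp_I_mul (ν : ℝ) :
    MemLp (fun t : ℝ => exp (I * ν * t)) ⊤ (volume : Measure ℝ) := by
  refine memLp_top_of_bound (Continuous.aestronglyMeasurable (by fun_prop)) 1
    (Eventually.of_forall fun t => ?_)
  rw [norm_exp]
  norm_num [mul_re, I_re, I_im]

def transl (c : ℝ) : L2 →L[ℂ] L2 :=
  (Lp.compMeasurePreservingₗᵢ ℂ (fun t : ℝ => t + c)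
    (measurePreserving_add_right volume c)).toContinuousLinearMap

theorem transl_coeFn (c : ℝ) (f : L2) :
    (transl c f : ℝ → ℂ) =ᵐ[volume] fun t => f (t + c) :=
  Lp.coeFn_compMeasurePreserving f (measurePreserving_add_right volume c)

theorem integrable_transl {f : L2} (hf : Integrable f) (c : ℝ) : Integrable (transl c f) :=
  (((measurePreserving_add_right volume c).integrable_comp
    (Lp.aestronglyMeasurable f)).mpr hf).congr (transl_coeFn c f).symm

theorem integral_cexp_mul_comp_add_neg (f : ℝ → ℂ) (ν ξ : ℝ) :
    ∫ x : ℝ, exp (I * ξ * x) * f (x + -ν) =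
      exp (I * ν * ξ) * ∫ x : ℝ, exp (I * ξ * x) * f x := by
  rw [← integral_add_right_eq_self _ ν, ← integral_const_mul]
  congr 1 with x
  rw [add_neg_cancel_right, ← mul_assoc, ← Complex.exp_add]
  push_cast
  ring_nf

theorem FourierL2.equiv_transl_neg (F : FourierL2) (ν : ℝ) {φ : L2} (hφ : Integrable φ) :
    F.equiv (transl (-ν) φ) = mul (fun t => exp (I * ν * t)) (F.equiv φ) := by
  apply Lp.ext
  filter_upwards [F.forward _ (integrable_transl hφ (-ν)), F.forward φ hφ,
    mul_coeFn (memLp_top_cexp_I_mul ν) (F.equiv φ)] with ξ hTφ hφ' hmul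
  rw [hTφ, hmul, hφ', ← integral_cexp_mul_comp_add_neg]
  exact integral_congr_ae <| (transl_coeFn (-ν) φ).mono fun x hx => by simp only [hx]

theorem W0_cexp (F : FourierL2) (ν : ℝ) :
    W0 F (fun t => exp (I * ν * t)) = transl (-ν) := by
  refine DFunLike.coe_injective <| Lp.eq_of_eq_on_integrable ENNReal.ofNat_ne_top
    (map_continuous _) (map_continuous _) fun φ hφ => ?_
  change F.equiv.symm (mul _ (F.equiv φ)) = _
  rw [← F.equiv_transl_neg ν hφ, F.equiv.symm_apply_apply]

theorem compress_transl_coeFn (c : ℝ) (φ : Lp2Plus) :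
    ((compress (transl c) φ : L2) : ℝ → ℂ) =ᵐ[volume]
      fun t => chiPlus t * ((φ : L2) : ℝ → ℂ) (t + c) := by
  filter_upwards [mul_coeFn chiPlus_memℒp (transl c (φ : L2)), transl_coeFn c (φ : L2)]
    with t hmul htransl
  rw [compress_coe, hmul, htransl]

theorem compress_transl_comp_coeFn (c d : ℝ) (φ : Lp2Plus) :
    (((compress (transl d)).comp (compress (transl c)) φ : L2) : ℝ → ℂ) =ᵐ[volume]
      fun t => chiPlus t * (chiPlus (t + d) * ((φ : L2) : ℝ → ℂ) (t + d + c)) := by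
  filter_upwards [compress_transl_coeFn d (compress (transl c) φ),
    (measurePreserving_add_right volume d).quasiMeasurePreserving.ae_eq_comp
      (compress_transl_coeFn c φ)] with t hd hc
  rw [ContinuousLinearMap.comp_apply, hd]
  exact congrArg _ hc

theorem compress_transl_comp_compress_transl_neg {c : ℝ} (hc : 0 ≤ c) :
    (compress (transl c)).comp (compress (transl (-c))) = 1 := by
  refine ContinuousLinearMap.ext fun φ => Subtype.ext <| Lp.ext ?_
  filter_upwards [compress_transl_comp_coeFn (-c) c φ, φ.2, volume.ae_ne 0] with t hφ hneg hne
  rw [hφ, add_neg_cancel_right, one_apply_eq_self]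
  rcases hne.lt_or_gt with ht | ht
  · simp [hneg ht]
  · simp [chiPlus, ht, add_pos_of_pos_of_nonneg ht hc]

def IsMulIndicator (K : Submodule ℂ L2) (s : Set ℝ) (P : K →L[ℂ] K) : Prop :=
  ∀ φ : K, ((P φ : L2) : ℝ → ℂ) =ᵐ[volume] s.indicator ((φ : L2) : ℝ → ℂ)

theorem isMulIndicator_one_sub_compress_transl_neg_comp (c : ℝ) :
    IsMulIndicator posSubspace (Ioo 0 c)
      (1 - (compress (transl (-c))).comp (compress (transl c))) := by
  intro φ
  filter_upwards [Lp.coeFn_sub (φ : L2) ((compress (transl (-c))).comp (compress (transl c)) φ),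
    compress_transl_comp_coeFn c (-c) φ, φ.2, volume.ae_ne 0, volume.ae_ne c]
    with t hsub hφ hneg hne₀ hne
  rw [sub_apply, one_apply_eq_self, Submodule.coe_sub, hsub,
    Pi.sub_apply, hφ, neg_add_cancel_right]
  rcases hne₀.lt_or_gt with ht₀ | ht₀
  · simp [hneg ht₀, indicator_apply]
  rcases hne.lt_or_gt with ht | ht <;> simp [chiPlus, ht₀, ht, ht.not_gt]

namespace IsMulIndicator

variable {K : Submodule ℂ L2} {s : Set ℝ} {P : K →L[ℂ] K}

theorem ae_eq_zero_of_notMem (hP : IsMulIndicator K s P) (φ : K) :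
    ∀ᵐ t : ℝ ∂volume, t ∉ s → ((P φ : L2) : ℝ → ℂ) t = 0 :=
  (hP φ).mono fun t hφ ht => by rw [hφ, indicator_of_notMem ht]

theorem apply_eq_self (hP : IsMulIndicator K s P) {φ : K}
    (hφ : ∀ᵐ t : ℝ ∂volume, t ∉ s → ((φ : L2) : ℝ → ℂ) t = 0) : P φ = φ := by
  refine Subtype.ext <| Lp.ext ?_
  filter_upwards [hP φ, hφ] with t hPφ hφt
  by_cases ht : t ∈ s
  · rw [hPφ, indicator_of_mem ht]
  · rw [hPφ, indicator_of_notMem ht, hφt ht]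

theorem comp_self (hP : IsMulIndicator K s P) : P.comp P = P :=
  ContinuousLinearMap.ext fun φ => hP.apply_eq_self (hP.ae_eq_zero_of_notMem φ)

theorem inner_map_left (hP : IsMulIndicator K s P) (φ ψ : K) :
    @inner ℂ _ _ (P φ : L2) (ψ : L2) = @inner ℂ _ _ (φ : L2) (P ψ : L2) := by
  rw [L2.inner_def, L2.inner_def]
  refine integral_congr_ae ?_
  filter_upwards [hP φ, hP ψ] with t hφ hψ
  by_cases ht : t ∈ s <;> simp [hφ, hψ, ht]

end IsMulIndicator

/-- For `ν ≥ 0`, `W(e_{-ν}) W(e_ν) = I`, and `I - W(e_ν) W(e_{-ν})` is the operator of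
multiplication by the indicator of `(0,ν)`; in particular it is an orthogonal
projection onto the subspace of functions vanishing a.e. outside `(0,ν)`. -/
theorem shift_left_inverse_and_projection
    (F : FourierL2) (ν : ℝ) (hν : 0 ≤ ν)
    (P : Lp2Plus →L[ℂ] Lp2Plus)
    (hP : P = 1 - (W F (fun t => Complex.exp (Complex.I * ν * t))).comp
      (W F (fun t => Complex.exp (Complex.I * (-ν) * t)))) :
    (W F (fun t => Complex.exp (Complex.I * (-ν) * t))).comp
        (W F (fun t => Complex.exp (Complex.I * ν * t))) = 1 ∧
    (∀ φ : Lp2Plus,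
      ((P φ : L2) : ℝ → ℂ) =ᵐ[volume]
        (Set.Ioo (0 : ℝ) ν).indicator (((φ : L2) : ℝ → ℂ))) ∧
    P.comp P = P ∧
    (∀ φ ψ : Lp2Plus,
      @inner ℂ _ _ ((P φ : L2)) ((ψ : L2)) = @inner ℂ _ _ ((φ : L2)) ((P ψ : L2))) ∧
    (∀ φ : Lp2Plus, ∀ᵐ t : ℝ ∂volume, t ∉ Set.Ioo (0 : ℝ) ν → ((P φ : L2) : ℝ → ℂ) t = 0) ∧
    (∀ φ : Lp2Plus, (∀ᵐ t : ℝ ∂volume, t ∉ Set.Ioo (0 : ℝ) ν → ((φ : L2) : ℝ → ℂ) t = 0) →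
      P φ = φ) := by
  have hW_pos : W F (fun t => exp (I * ν * t)) = compress (transl (-ν)) := by
    rw [W, W0_cexp]
  have hW_neg : W F (fun t => exp (I * (-ν) * t)) = compress (transl ν) := by
    simpa [W] using congrArg compress (W0_cexp F (-ν))
  rw [hW_pos, hW_neg] at hP ⊢
  have hPind : IsMulIndicator posSubspace (Ioo 0 ν) P :=
    hP ▸ isMulIndicator_one_sub_compress_transl_neg_comp ν
  exact ⟨compress_transl_comp_compress_transl_neg hν, hPind, hPind.comp_self,
    hPind.inner_map_left, hPind.ae_eq_zero_of_notMem, fun φ hφ => hPind.apply_eq_self hφ⟩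

end WienerHopf
end
end
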